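/- Let (ρ, u) be a smooth (C^∞) solution of the steady isentropic compressible Euler equations on U with ρ > 0 and u₁ > 0, and set q = c²(ρ)/u₁². Then s = log ρ satisfies the second-order equation in divergence form: ∂₁((q − 1)∂₁s − β₂∂₂s − β₃∂₃s) + ∂₂(−β₂∂₁s + (q − β₂²)∂₂s − β₂β₃∂₃s) + ∂₃(−β₃∂₁s − β₂β₃∂₂s + (q − β₃²)∂₃s) − ((q − 1)∂₁s − β₂∂₂s − β₃∂₃s)² = −((∂₂β₂)² + (∂₃β₃)² + 2∂₂β₃∂₃β₂) on U. -/

import Mathlib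

/-- Partial derivative in direction `i` of a scalar function on `ℝ³`. -/
noncomputable def pd (i : Fin 3) (f : (Fin 3 → ℝ) → ℝ) (x : Fin 3 → ℝ) : ℝ :=
  fderiv ℝ f x (Pi.single i 1)

open Real Filter

variable {f g : (Fin 3 → ℝ) → ℝ} {x : Fin 3 → ℝ} {i : Fin 3}

lemma pd_congr (h : f =ᶠ[nhds x] g) : pd i f x = pd i g x := by
  unfold pd; rw [h.fderiv_eq]

lemma HasFDerivAt.pd_eq {f' : (Fin 3 → ℝ) →L[ℝ] ℝ} (h : HasFDerivAt f f' x) :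
    pd i f x = f' (Pi.single i 1) := by rw [pd, h.fderiv]

lemma pd_add (hf : DifferentiableAt ℝ f x) (hg : DifferentiableAt ℝ g x) :
    pd i (fun y => f y + g y) x = pd i f x + pd i g x := by
  have := (hf.hasFDerivAt.add hg.hasFDerivAt).pd_eq (i := i) (f := fun y => f y + g y)
  simpa [pd] using this

lemma pd_mul (hf : DifferentiableAt ℝ f x) (hg : DifferentiableAt ℝ g x) :
    pd i (fun y => f y * g y) x = pd i f x * g x + f x * pd i g x := by
  have := (hf.hasFDerivAt.mul hg.hasFDerivAt).pd_eq (i := i) (f := fun y => f y * g y)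
  simp only [ContinuousLinearMap.add_apply, ContinuousLinearMap.smul_apply, smul_eq_mul] at this
  simp only [pd] at this ⊢
  rw [this]; ring

lemma pd_neg : pd i (fun y => -f y) x = -pd i f x := by
  unfold pd; rw [fderiv_fun_neg]; simp

lemma pd_sub (hf : DifferentiableAt ℝ f x) (hg : DifferentiableAt ℝ g x) :
    pd i (fun y => f y - g y) x = pd i f x - pd i g x := by
  have := (hf.hasFDerivAt.sub hg.hasFDerivAt).pd_eq (i := i) (f := fun y => f y - g y)
  simpa [pd] using this

lemma pd_inv (hg : DifferentiableAt ℝ g x) (hz : g x ≠ 0) :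
    pd i (fun y => (g y)⁻¹) x = -pd i g x / g x ^ 2 := by
  have := ((hasDerivAt_inv hz).comp_hasFDerivAt x hg.hasFDerivAt).pd_eq (i := i)
  simp only [ContinuousLinearMap.smul_apply, smul_eq_mul, Function.comp_def] at this
  simp only [pd] at this ⊢; rw [this]; field_simp

lemma pd_div (hf : DifferentiableAt ℝ f x) (hg : DifferentiableAt ℝ g x) (hgx : g x ≠ 0) :
    pd i (fun y => f y / g y) x = (pd i f x * g x - f x * pd i g x) / g x ^ 2 := by
  have h1 : pd i (fun y => f y * (g y)⁻¹) x
      = pd i f x * (g x)⁻¹ + f x * pd i (fun y => (g y)⁻¹) x :=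
    pd_mul hf (hg.inv hgx)
  have h2 := pd_inv (i := i) hg hgx
  simp only [div_eq_mul_inv]
  rw [h1, h2]; field_simp; ring

lemma pd_log (hf : DifferentiableAt ℝ f x) (hfx : f x ≠ 0) :
    pd i (fun y => Real.log (f y)) x = pd i f x / f x := by
  have := (hf.hasFDerivAt.log hfx).pd_eq (i := i)
  simp only [ContinuousLinearMap.smul_apply, smul_eq_mul] at this
  simp only [pd] at this ⊢; rw [this]; field_simp

lemma pd_rpow_div {p : ℝ} (hf : DifferentiableAt ℝ f x) (hfx : f x ≠ 0) (hp : p ≠ 0) :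
    pd i (fun y => f y ^ p / p) x = f x ^ (p - 1) * pd i f x := by
  have heq : (fun y => f y ^ p / p) = (fun y => f y ^ p * p⁻¹) := by
    funext y; rw [div_eq_mul_inv]
  rw [heq]
  have h1 := ((hf.hasFDerivAt.rpow_const (p := p) (Or.inl hfx)).mul_const p⁻¹).pd_eq (i := i)
  simp only [ContinuousLinearMap.smul_apply, smul_eq_mul, ContinuousLinearMap.coe_smul',
    Pi.smul_apply] at h1
  simp only [pd] at h1 ⊢; rw [h1]; field_simp

lemma contDiffOn_pd {U : Set (Fin 3 → ℝ)} (hU : IsOpen U) (hf : ContDiffOn ℝ (⊤ : ℕ∞) f U) :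
    ContDiffOn ℝ (⊤ : ℕ∞) (pd i f) U := by
  have h1 : ContDiffOn ℝ (⊤ : ℕ∞) (fderiv ℝ f) U := hf.fderiv_of_isOpen hU (by simp)
  exact h1.clm_apply contDiffOn_const

lemma diffAt_of_contDiffOn {U : Set (Fin 3 → ℝ)} (hU : IsOpen U) (hf : ContDiffOn ℝ (⊤ : ℕ∞) f U)
    (hx : x ∈ U) : DifferentiableAt ℝ f x :=
  (hf.contDiffAt (hU.mem_nhds hx)).differentiableAt (by simp)

lemma pd_comm {U : Set (Fin 3 → ℝ)} (hU : IsOpen U) (hf : ContDiffOn ℝ (⊤ : ℕ∞) f U) (hx : x ∈ U)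
    (i j : Fin 3) : pd i (pd j f) x = pd j (pd i f) x := by
  have hder : ContDiffOn ℝ (⊤ : ℕ∞) (fderiv ℝ f) U := hf.fderiv_of_isOpen hU (by simp)
  have hd : DifferentiableAt ℝ (fderiv ℝ f) x :=
    (hder.contDiffAt (hU.mem_nhds hx)).differentiableAt (by simp)
  have hev : ∀ᶠ y in nhds x, HasFDerivAt f (fderiv ℝ f y) y := by
    filter_upwards [hU.mem_nhds hx] with y hy
    exact ((hf.contDiffAt (hU.mem_nhds hy)).differentiableAt (by simp)).hasFDerivAt
  have hsymm := second_derivative_symmetric_of_eventually hev hd.hasFDerivAt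
  have key : ∀ (k : Fin 3) (v : Fin 3 → ℝ), pd k (fun y => fderiv ℝ f y v) x
      = (fderiv ℝ (fderiv ℝ f) x) (Pi.single k 1) v := by
    intro k v
    have h2 := fderiv_clm_apply (c := fderiv ℝ f) (u := fun _ => v) hd (differentiableAt_const v)
    unfold pd; rw [h2]; simp
  have e1 : pd i (pd j f) x = (fderiv ℝ (fderiv ℝ f) x) (Pi.single i 1) (Pi.single j 1) :=
    key i (Pi.single j 1)
  have e2 : pd j (pd i f) x = (fderiv ℝ (fderiv ℝ f) x) (Pi.single j 1) (Pi.single i 1) :=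
    key j (Pi.single i 1)
  rw [e1, e2, hsymm]


lemma alg1 (r a b c K r0 r1 r2 a1 a2 b1 c2 a0 : ℝ) (hr : r ≠ 0) (ha : a ≠ 0)
    (hM : r0 * a + r * a0 + (r1 * b + r * b1) + (r2 * c + r * c2) = 0)
    (hL0 : r * (a * a0 + b * a1 + c * a2) + K * r0 = 0) :
    (K / a ^ 2 - 1) * (r0 / r) - b / a * (r1 / r) - c / a * (r2 / r)
      = (b1 * a - b * a1) / a ^ 2 + (c2 * a - c * a2) / a ^ 2 := by
  have hnum : r * (a * a0 + b * a1 + c * a2) + K * r0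
      - a * (r0 * a + r * a0 + (r1 * b + r * b1) + (r2 * c + r * c2)) = 0 := by
    linear_combination hL0 - a * hM
  have key : (K / a ^ 2 - 1) * (r0 / r) - b / a * (r1 / r) - c / a * (r2 / r)
      = (b1 * a - b * a1) / a ^ 2 + (c2 * a - c * a2) / a ^ 2
        + (r * (a * a0 + b * a1 + c * a2) + K * r0
            - a * (r0 * a + r * a0 + (r1 * b + r * b1) + (r2 * c + r * c2))) / (r * a ^ 2) := by
    field_simp
    ring
  rw [hnum, zero_div, add_zero] at key
  exact key

lemma alg2 (r a b c K r0 r1 r2 a0 a1 a2 b0 b1 b2 c2 : ℝ) (hr : r ≠ 0) (ha : a ≠ 0)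
    (hM : r0 * a + r * a0 + (r1 * b + r * b1) + (r2 * c + r * c2) = 0)
    (hL1 : r * (a * b0 + b * b1 + c * b2) + K * r1 = 0) :
    -(b / a) * (r0 / r) + (K / a ^ 2 - (b / a) ^ 2) * (r1 / r) - b / a * (c / a) * (r2 / r)
      = -((b0 * a - b * a0) / a ^ 2 + b / a * ((b1 * a - b * a1) / a ^ 2)
            + c / a * ((b2 * a - b * a2) / a ^ 2))
        + b / a * ((b1 * a - b * a1) / a ^ 2 + (c2 * a - c * a2) / a ^ 2) := by
  have hnum : r * (a * b0 + b * b1 + c * b2) + K * r1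
      - b * (r0 * a + r * a0 + (r1 * b + r * b1) + (r2 * c + r * c2)) = 0 := by
    linear_combination hL1 - b * hM
  have key : -(b / a) * (r0 / r) + (K / a ^ 2 - (b / a) ^ 2) * (r1 / r)
        - b / a * (c / a) * (r2 / r)
      = -((b0 * a - b * a0) / a ^ 2 + b / a * ((b1 * a - b * a1) / a ^ 2)
            + c / a * ((b2 * a - b * a2) / a ^ 2))
        + b / a * ((b1 * a - b * a1) / a ^ 2 + (c2 * a - c * a2) / a ^ 2)
        + (r * (a * b0 + b * b1 + c * b2) + K * r1
            - b * (r0 * a + r * a0 + (r1 * b + r * b1) + (r2 * c + r * c2))) / (r * a ^ 2) := by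
    field_simp
    ring
  rw [hnum, zero_div, add_zero] at key
  exact key

lemma alg3 (r a b c K r0 r1 r2 a0 a1 a2 b1 c0 c1 c2 : ℝ) (hr : r ≠ 0) (ha : a ≠ 0)
    (hM : r0 * a + r * a0 + (r1 * b + r * b1) + (r2 * c + r * c2) = 0)
    (hL2 : r * (a * c0 + b * c1 + c * c2) + K * r2 = 0) :
    -(c / a) * (r0 / r) - b / a * (c / a) * (r1 / r) + (K / a ^ 2 - (c / a) ^ 2) * (r2 / r)
      = -((c0 * a - c * a0) / a ^ 2 + b / a * ((c1 * a - c * a1) / a ^ 2)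
            + c / a * ((c2 * a - c * a2) / a ^ 2))
        + c / a * ((b1 * a - b * a1) / a ^ 2 + (c2 * a - c * a2) / a ^ 2) := by
  have hnum : r * (a * c0 + b * c1 + c * c2) + K * r2
      - c * (r0 * a + r * a0 + (r1 * b + r * b1) + (r2 * c + r * c2)) = 0 := by
    linear_combination hL2 - c * hM
  have key : -(c / a) * (r0 / r) - b / a * (c / a) * (r1 / r)
        + (K / a ^ 2 - (c / a) ^ 2) * (r2 / r)
      = -((c0 * a - c * a0) / a ^ 2 + b / a * ((c1 * a - c * a1) / a ^ 2)
            + c / a * ((c2 * a - c * a2) / a ^ 2))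
        + c / a * ((b1 * a - b * a1) / a ^ 2 + (c2 * a - c * a2) / a ^ 2)
        + (r * (a * c0 + b * c1 + c * c2) + K * r2
            - c * (r0 * a + r * a0 + (r1 * b + r * b1) + (r2 * c + r * c2))) / (r * a ^ 2) := by
    field_simp
    ring
  rw [hnum, zero_div, add_zero] at key
  exact key

lemma euler_claims (U : Set (Fin 3 → ℝ)) (hU : IsOpen U) (γ : ℝ) (hγ : γ ≠ 0)
    (ρ : (Fin 3 → ℝ) → ℝ) (u : Fin 3 → (Fin 3 → ℝ) → ℝ)
    (hρ : ContDiffOn ℝ (⊤ : ℕ∞) ρ U) (hu : ∀ i, ContDiffOn ℝ (⊤ : ℕ∞) (u i) U)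
    (hρpos : ∀ x ∈ U, 0 < ρ x) (hu1pos : ∀ x ∈ U, 0 < u 0 x)
    (hmass : ∀ x ∈ U,
      pd 0 (fun y => ρ y * u 0 y) x + pd 1 (fun y => ρ y * u 1 y) x
        + pd 2 (fun y => ρ y * u 2 y) x = 0)
    (hmom : ∀ i : Fin 3, ∀ x ∈ U,
      pd 0 (fun y => ρ y * u i y * u 0 y) x + pd 1 (fun y => ρ y * u i y * u 1 y) x
        + pd 2 (fun y => ρ y * u i y * u 2 y) x + pd i (fun y => ρ y ^ γ / γ) x = 0) :
    ∀ y ∈ U,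
      ((ρ y ^ (γ - 1) / (u 0 y) ^ 2 - 1) * pd 0 (fun z => Real.log (ρ z)) y
          - (u 1 y / u 0 y) * pd 1 (fun z => Real.log (ρ z)) y
          - (u 2 y / u 0 y) * pd 2 (fun z => Real.log (ρ z)) y
        = pd 1 (fun z => u 1 z / u 0 z) y + pd 2 (fun z => u 2 z / u 0 z) y)
      ∧ (-(u 1 y / u 0 y) * pd 0 (fun z => Real.log (ρ z)) y
          + (ρ y ^ (γ - 1) / (u 0 y) ^ 2 - (u 1 y / u 0 y) ^ 2) * pd 1 (fun z => Real.log (ρ z)) y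
          - (u 1 y / u 0 y) * (u 2 y / u 0 y) * pd 2 (fun z => Real.log (ρ z)) y
        = -(pd 0 (fun z => u 1 z / u 0 z) y + (u 1 y / u 0 y) * pd 1 (fun z => u 1 z / u 0 z) y
              + (u 2 y / u 0 y) * pd 2 (fun z => u 1 z / u 0 z) y)
          + (u 1 y / u 0 y) * (pd 1 (fun z => u 1 z / u 0 z) y + pd 2 (fun z => u 2 z / u 0 z) y))
      ∧ (-(u 2 y / u 0 y) * pd 0 (fun z => Real.log (ρ z)) y
          - (u 1 y / u 0 y) * (u 2 y / u 0 y) * pd 1 (fun z => Real.log (ρ z)) y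
          + (ρ y ^ (γ - 1) / (u 0 y) ^ 2 - (u 2 y / u 0 y) ^ 2) * pd 2 (fun z => Real.log (ρ z)) y
        = -(pd 0 (fun z => u 2 z / u 0 z) y + (u 1 y / u 0 y) * pd 1 (fun z => u 2 z / u 0 z) y
              + (u 2 y / u 0 y) * pd 2 (fun z => u 2 z / u 0 z) y)
          + (u 2 y / u 0 y) * (pd 1 (fun z => u 1 z / u 0 z) y + pd 2 (fun z => u 2 z / u 0 z) y)) := by
  intro y hy
  have rne : ρ y ≠ 0 := ne_of_gt (hρpos y hy)
  have ane : u 0 y ≠ 0 := ne_of_gt (hu1pos y hy)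
  have dρ : DifferentiableAt ℝ ρ y := diffAt_of_contDiffOn hU hρ hy
  have du : ∀ j, DifferentiableAt ℝ (u j) y := fun j => diffAt_of_contDiffOn hU (hu j) hy
  have hM := hmass y hy
  rw [pd_mul (i := 0) dρ (du 0), pd_mul (i := 1) dρ (du 1), pd_mul (i := 2) dρ (du 2)] at hM
  have hL : ∀ j : Fin 3, ρ y * (u 0 y * pd 0 (u j) y + u 1 y * pd 1 (u j) y
      + u 2 y * pd 2 (u j) y) + ρ y ^ (γ - 1) * pd j ρ y = 0 := by
    intro j
    have h := hmom j y hy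
    rw [pd_mul (i := 0) (dρ.fun_mul (du j)) (du 0), pd_mul (i := 1) (dρ.fun_mul (du j)) (du 1),
        pd_mul (i := 2) (dρ.fun_mul (du j)) (du 2), pd_mul (i := 0) dρ (du j),
        pd_mul (i := 1) dρ (du j), pd_mul (i := 2) dρ (du j),
        pd_rpow_div (i := j) dρ rne hγ] at h
    linear_combination h - u j y * hM
  have hs : ∀ i : Fin 3, pd i (fun z => Real.log (ρ z)) y = pd i ρ y / ρ y :=
    fun i => pd_log dρ rne
  have hb2 : ∀ i : Fin 3, pd i (fun z => u 1 z / u 0 z) y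
      = (pd i (u 1) y * u 0 y - u 1 y * pd i (u 0) y) / u 0 y ^ 2 :=
    fun i => pd_div (du 1) (du 0) ane
  have hb3 : ∀ i : Fin 3, pd i (fun z => u 2 z / u 0 z) y
      = (pd i (u 2) y * u 0 y - u 2 y * pd i (u 0) y) / u 0 y ^ 2 :=
    fun i => pd_div (du 2) (du 0) ane
  have hL0 := hL 0; have hL1 := hL 1; have hL2 := hL 2
  refine ⟨?_, ?_, ?_⟩
  · rw [hs 0, hs 1, hs 2, hb2 1, hb3 2]
    exact alg1 (ρ y) (u 0 y) (u 1 y) (u 2 y) (ρ y ^ (γ - 1)) (pd 0 ρ y) (pd 1 ρ y) (pd 2 ρ y)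
      (pd 1 (u 0) y) (pd 2 (u 0) y) (pd 1 (u 1) y) (pd 2 (u 2) y) (pd 0 (u 0) y) rne ane hM hL0
  · rw [hs 0, hs 1, hs 2, hb2 0, hb2 1, hb2 2, hb3 2]
    exact alg2 (ρ y) (u 0 y) (u 1 y) (u 2 y) (ρ y ^ (γ - 1)) (pd 0 ρ y) (pd 1 ρ y) (pd 2 ρ y)
      (pd 0 (u 0) y) (pd 1 (u 0) y) (pd 2 (u 0) y) (pd 0 (u 1) y) (pd 1 (u 1) y) (pd 2 (u 1) y)
      (pd 2 (u 2) y) rne ane hM hL1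
  · rw [hs 0, hs 1, hs 2, hb3 0, hb3 1, hb3 2, hb2 1]
    exact alg3 (ρ y) (u 0 y) (u 1 y) (u 2 y) (ρ y ^ (γ - 1)) (pd 0 ρ y) (pd 1 ρ y) (pd 2 ρ y)
      (pd 0 (u 0) y) (pd 1 (u 0) y) (pd 2 (u 0) y) (pd 1 (u 1) y) (pd 0 (u 2) y) (pd 1 (u 2) y)
      (pd 2 (u 2) y) rne ane hM hL2

/-- `s = log ρ` satisfies a second-order equation in divergence form,
where `q = c²(ρ)/u₁²`, `β₂ = u₂/u₁`, `β₃ = u₃/u₁`. -/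
theorem second_order_equation_for_s
    (U : Set (Fin 3 → ℝ)) (hU : IsOpen U) (γ : ℝ) (hγ1 : 1 < γ) (hγ3 : γ < 3)
    (ρ : (Fin 3 → ℝ) → ℝ) (u : Fin 3 → (Fin 3 → ℝ) → ℝ)
    (hρ : ContDiffOn ℝ (⊤ : ℕ∞) ρ U) (hu : ∀ i, ContDiffOn ℝ (⊤ : ℕ∞) (u i) U)
    (hρpos : ∀ x ∈ U, 0 < ρ x) (hu1pos : ∀ x ∈ U, 0 < u 0 x)
    (hmass : ∀ x ∈ U,
      pd 0 (fun y => ρ y * u 0 y) x + pd 1 (fun y => ρ y * u 1 y) x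
        + pd 2 (fun y => ρ y * u 2 y) x = 0)
    (hmom : ∀ i : Fin 3, ∀ x ∈ U,
      pd 0 (fun y => ρ y * u i y * u 0 y) x + pd 1 (fun y => ρ y * u i y * u 1 y) x
        + pd 2 (fun y => ρ y * u i y * u 2 y) x + pd i (fun y => ρ y ^ γ / γ) x = 0)
    (s β₂ β₃ q : (Fin 3 → ℝ) → ℝ)
    (hs : s = fun y => Real.log (ρ y))
    (hβ₂ : β₂ = fun y => u 1 y / u 0 y) (hβ₃ : β₃ = fun y => u 2 y / u 0 y)
    (hq : q = fun y => ρ y ^ (γ - 1) / (u 0 y) ^ 2) :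
    ∀ x ∈ U,
      pd 0 (fun y => (q y - 1) * pd 0 s y - β₂ y * pd 1 s y - β₃ y * pd 2 s y) x
        + pd 1 (fun y => -β₂ y * pd 0 s y + (q y - β₂ y ^ 2) * pd 1 s y
            - β₂ y * β₃ y * pd 2 s y) x
        + pd 2 (fun y => -β₃ y * pd 0 s y - β₂ y * β₃ y * pd 1 s y
            + (q y - β₃ y ^ 2) * pd 2 s y) x
        - ((q x - 1) * pd 0 s x - β₂ x * pd 1 s x - β₃ x * pd 2 s x) ^ 2
      = -((pd 1 β₂ x) ^ 2 + (pd 2 β₃ x) ^ 2 + 2 * pd 1 β₃ x * pd 2 β₂ x) := by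
  have hγ0 : γ ≠ 0 := by linarith
  subst hs hβ₂ hβ₃ hq
  intro x hx
  have haneU : ∀ y ∈ U, u 0 y ≠ 0 := fun y hy => ne_of_gt (hu1pos y hy)
  have hclaims := euler_claims U hU γ hγ0 ρ u hρ hu hρpos hu1pos hmass hmom
  have hB2 : ContDiffOn ℝ (⊤ : ℕ∞) (fun z => u 1 z / u 0 z) U := (hu 1).div (hu 0) haneU
  have hB3 : ContDiffOn ℝ (⊤ : ℕ∞) (fun z => u 2 z / u 0 z) U := (hu 2).div (hu 0) haneU
  have db2 : DifferentiableAt ℝ (fun z => u 1 z / u 0 z) x := diffAt_of_contDiffOn hU hB2 hx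
  have db3 : DifferentiableAt ℝ (fun z => u 2 z / u 0 z) x := diffAt_of_contDiffOn hU hB3 hx
  have dp2 : ∀ k : Fin 3, DifferentiableAt ℝ (pd k (fun z => u 1 z / u 0 z)) x :=
    fun k => diffAt_of_contDiffOn hU (contDiffOn_pd hU hB2) hx
  have dp3 : ∀ k : Fin 3, DifferentiableAt ℝ (pd k (fun z => u 2 z / u 0 z)) x :=
    fun k => diffAt_of_contDiffOn hU (contDiffOn_pd hU hB3) hx
  have hE1 : pd 0 (fun y => (ρ y ^ (γ - 1) / (u 0 y) ^ 2 - 1) * pd 0 (fun z => Real.log (ρ z)) y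
        - u 1 y / u 0 y * pd 1 (fun z => Real.log (ρ z)) y
        - u 2 y / u 0 y * pd 2 (fun z => Real.log (ρ z)) y) x
      = pd 0 (fun y => pd 1 (fun z => u 1 z / u 0 z) y + pd 2 (fun z => u 2 z / u 0 z) y) x :=
    pd_congr (by filter_upwards [hU.mem_nhds hx] with y hy; exact (hclaims y hy).1)
  have hE2 : pd 1 (fun y => -(u 1 y / u 0 y) * pd 0 (fun z => Real.log (ρ z)) y
        + (ρ y ^ (γ - 1) / (u 0 y) ^ 2 - (u 1 y / u 0 y) ^ 2) * pd 1 (fun z => Real.log (ρ z)) y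
        - (u 1 y / u 0 y) * (u 2 y / u 0 y) * pd 2 (fun z => Real.log (ρ z)) y) x
      = pd 1 (fun y => -(pd 0 (fun z => u 1 z / u 0 z) y
            + (u 1 y / u 0 y) * pd 1 (fun z => u 1 z / u 0 z) y
            + (u 2 y / u 0 y) * pd 2 (fun z => u 1 z / u 0 z) y)
          + (u 1 y / u 0 y) * (pd 1 (fun z => u 1 z / u 0 z) y
            + pd 2 (fun z => u 2 z / u 0 z) y)) x :=
    pd_congr (by filter_upwards [hU.mem_nhds hx] with y hy; exact (hclaims y hy).2.1)
  have hE3 : pd 2 (fun y => -(u 2 y / u 0 y) * pd 0 (fun z => Real.log (ρ z)) y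
        - (u 1 y / u 0 y) * (u 2 y / u 0 y) * pd 1 (fun z => Real.log (ρ z)) y
        + (ρ y ^ (γ - 1) / (u 0 y) ^ 2 - (u 2 y / u 0 y) ^ 2)
            * pd 2 (fun z => Real.log (ρ z)) y) x
      = pd 2 (fun y => -(pd 0 (fun z => u 2 z / u 0 z) y
            + (u 1 y / u 0 y) * pd 1 (fun z => u 2 z / u 0 z) y
            + (u 2 y / u 0 y) * pd 2 (fun z => u 2 z / u 0 z) y)
          + (u 2 y / u 0 y) * (pd 1 (fun z => u 1 z / u 0 z) y
            + pd 2 (fun z => u 2 z / u 0 z) y)) x :=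
    pd_congr (by filter_upwards [hU.mem_nhds hx] with y hy; exact (hclaims y hy).2.2)
  have ex1 : pd 0 (fun y => pd 1 (fun z => u 1 z / u 0 z) y
        + pd 2 (fun z => u 2 z / u 0 z) y) x
      = pd 0 (pd 1 (fun z => u 1 z / u 0 z)) x + pd 0 (pd 2 (fun z => u 2 z / u 0 z)) x :=
    pd_add (dp2 1) (dp3 2)
  have hX2 : pd 1 (fun y => -(pd 0 (fun z => u 1 z / u 0 z) y
            + (u 1 y / u 0 y) * pd 1 (fun z => u 1 z / u 0 z) y
            + (u 2 y / u 0 y) * pd 2 (fun z => u 1 z / u 0 z) y)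
          + (u 1 y / u 0 y) * (pd 1 (fun z => u 1 z / u 0 z) y
            + pd 2 (fun z => u 2 z / u 0 z) y)) x
      = -(pd 1 (pd 0 (fun z => u 1 z / u 0 z)) x
            + (pd 1 (fun z => u 1 z / u 0 z) x * pd 1 (fun z => u 1 z / u 0 z) x
              + u 1 x / u 0 x * pd 1 (pd 1 (fun z => u 1 z / u 0 z)) x)
            + (pd 1 (fun z => u 2 z / u 0 z) x * pd 2 (fun z => u 1 z / u 0 z) x
              + u 2 x / u 0 x * pd 1 (pd 2 (fun z => u 1 z / u 0 z)) x))
        + (pd 1 (fun z => u 1 z / u 0 z) x * (pd 1 (fun z => u 1 z / u 0 z) x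
              + pd 2 (fun z => u 2 z / u 0 z) x)
            + u 1 x / u 0 x * (pd 1 (pd 1 (fun z => u 1 z / u 0 z)) x
              + pd 1 (pd 2 (fun z => u 2 z / u 0 z)) x)) := by
    rw [pd_add ((((dp2 0).fun_add (db2.fun_mul (dp2 1))).fun_add (db3.fun_mul (dp2 2))).fun_neg)
          (db2.fun_mul ((dp2 1).fun_add (dp3 2))),
        pd_neg,
        pd_add ((dp2 0).fun_add (db2.fun_mul (dp2 1))) (db3.fun_mul (dp2 2)),
        pd_add (dp2 0) (db2.fun_mul (dp2 1)),
        pd_mul db2 (dp2 1), pd_mul db3 (dp2 2),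
        pd_mul db2 ((dp2 1).fun_add (dp3 2)),
        pd_add (dp2 1) (dp3 2)]
  have hX3 : pd 2 (fun y => -(pd 0 (fun z => u 2 z / u 0 z) y
            + (u 1 y / u 0 y) * pd 1 (fun z => u 2 z / u 0 z) y
            + (u 2 y / u 0 y) * pd 2 (fun z => u 2 z / u 0 z) y)
          + (u 2 y / u 0 y) * (pd 1 (fun z => u 1 z / u 0 z) y
            + pd 2 (fun z => u 2 z / u 0 z) y)) x
      = -(pd 2 (pd 0 (fun z => u 2 z / u 0 z)) x
            + (pd 2 (fun z => u 1 z / u 0 z) x * pd 1 (fun z => u 2 z / u 0 z) x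
              + u 1 x / u 0 x * pd 2 (pd 1 (fun z => u 2 z / u 0 z)) x)
            + (pd 2 (fun z => u 2 z / u 0 z) x * pd 2 (fun z => u 2 z / u 0 z) x
              + u 2 x / u 0 x * pd 2 (pd 2 (fun z => u 2 z / u 0 z)) x))
        + (pd 2 (fun z => u 2 z / u 0 z) x * (pd 1 (fun z => u 1 z / u 0 z) x
              + pd 2 (fun z => u 2 z / u 0 z) x)
            + u 2 x / u 0 x * (pd 2 (pd 1 (fun z => u 1 z / u 0 z)) x
              + pd 2 (pd 2 (fun z => u 2 z / u 0 z)) x)) := by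
    rw [pd_add ((((dp3 0).fun_add (db2.fun_mul (dp3 1))).fun_add (db3.fun_mul (dp3 2))).fun_neg)
          (db3.fun_mul ((dp2 1).fun_add (dp3 2))),
        pd_neg,
        pd_add ((dp3 0).fun_add (db2.fun_mul (dp3 1))) (db3.fun_mul (dp3 2)),
        pd_add (dp3 0) (db2.fun_mul (dp3 1)),
        pd_mul db2 (dp3 1), pd_mul db3 (dp3 2),
        pd_mul db3 ((dp2 1).fun_add (dp3 2)),
        pd_add (dp2 1) (dp3 2)]
  have hc1 : pd 0 (pd 1 (fun z => u 1 z / u 0 z)) x = pd 1 (pd 0 (fun z => u 1 z / u 0 z)) x :=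
    pd_comm hU hB2 hx 0 1
  have hc2 : pd 0 (pd 2 (fun z => u 2 z / u 0 z)) x = pd 2 (pd 0 (fun z => u 2 z / u 0 z)) x :=
    pd_comm hU hB3 hx 0 2
  have hc3 : pd 1 (pd 2 (fun z => u 1 z / u 0 z)) x = pd 2 (pd 1 (fun z => u 1 z / u 0 z)) x :=
    pd_comm hU hB2 hx 1 2
  have hc4 : pd 1 (pd 2 (fun z => u 2 z / u 0 z)) x = pd 2 (pd 1 (fun z => u 2 z / u 0 z)) x :=
    pd_comm hU hB3 hx 1 2
  have main : pd 0 (fun y => (ρ y ^ (γ - 1) / (u 0 y) ^ 2 - 1) * pd 0 (fun z => Real.log (ρ z)) y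
        - u 1 y / u 0 y * pd 1 (fun z => Real.log (ρ z)) y
        - u 2 y / u 0 y * pd 2 (fun z => Real.log (ρ z)) y) x
      + pd 1 (fun y => -(u 1 y / u 0 y) * pd 0 (fun z => Real.log (ρ z)) y
        + (ρ y ^ (γ - 1) / (u 0 y) ^ 2 - (u 1 y / u 0 y) ^ 2) * pd 1 (fun z => Real.log (ρ z)) y
        - (u 1 y / u 0 y) * (u 2 y / u 0 y) * pd 2 (fun z => Real.log (ρ z)) y) x
      + pd 2 (fun y => -(u 2 y / u 0 y) * pd 0 (fun z => Real.log (ρ z)) y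
        - (u 1 y / u 0 y) * (u 2 y / u 0 y) * pd 1 (fun z => Real.log (ρ z)) y
        + (ρ y ^ (γ - 1) / (u 0 y) ^ 2 - (u 2 y / u 0 y) ^ 2)
            * pd 2 (fun z => Real.log (ρ z)) y) x
      - ((ρ x ^ (γ - 1) / (u 0 x) ^ 2 - 1) * pd 0 (fun z => Real.log (ρ z)) x
          - u 1 x / u 0 x * pd 1 (fun z => Real.log (ρ z)) x
          - u 2 x / u 0 x * pd 2 (fun z => Real.log (ρ z)) x) ^ 2
      = -((pd 1 (fun z => u 1 z / u 0 z) x) ^ 2 + (pd 2 (fun z => u 2 z / u 0 z) x) ^ 2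
          + 2 * pd 1 (fun z => u 2 z / u 0 z) x * pd 2 (fun z => u 1 z / u 0 z) x) := by
    rw [hE1, hE2, hE3, (hclaims x hx).1, ex1, hX2, hX3, hc1, hc2, hc3, hc4]
    ring
  exact main
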